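/- arXiv:2408.02383 — 2 statements merged into one kernel-verified Lean document; each statement's English description precedes it below -/
import Mathlib

section
/- Let U be an encoding for g₁,…,g_p with scalars μ₁,…,μ_p, let e and f be error elements with s_e = (⟨g_j,e⟩)_j and s_f = (⟨g_j,f⟩)_j, and let (T^e_x)_x and (T^f_x)_x be families of matrices realizing the block decompositions of U† W(e) U and U† W(f) U (i.e., the ((x',k'),(x,k)) entry of U† W(e) U is δ_{x', x+s_e} (T^e_{x+s_e})_{k',k}, and similarly for f). Then: (1) there exists c ∈ ℂ with |c| = 1 such that for all x, x', k, k', the ((x',k'),(x,k)) entry of U† W(e+f) U equals c · (T^e_{x+s_f+s_e} · T^f_{x+s_f})_{k',k} if x' = x + s_e + s_f, and 0 otherwise; and (2) there exists c' ∈ ℂ with |c'| = 1 such that the ((x',k'),(x,k)) entry of U† W(−e) U equals c' · ((T^e_x)†)_{k',k} if x' = x − s_e, and 0 otherwise. -/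
/-! The Weyl operators form a projective representation of `(ZMod d)^N × (ZMod d)^N`:
`W(e) W(f) = ω^{Σ lₙ mₙ} W(e + f)` and `W(-e) = ω^{-Σ lₙ kₙ} W(e)†`, the phases being values of
the character `a ↦ ω^a` and hence unimodular. Conjugation by the unitary `U` preserves products
and adjoints, and a product (adjoint) of block-shift matrices is again a block shift, with the
shifts added (negated) and the blocks multiplied (adjoined). -/

open Matrix Complex

noncomputable section

/-- ω = exp(2πi/d). -/
def omga (d : ℕ) : ℂ := Complex.exp (2 * Real.pi * Complex.I / d)

/-- The Weyl operator W_{k,l}: (j,j') entry is ω^{jk} if j' = j + l, else 0. -/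
def weyl (d : ℕ) (k l : ZMod d) : Matrix (ZMod d) (ZMod d) ℂ :=
  Matrix.of fun j j' => if j' = j + l then omga d ^ (j * k).val else 0

/-- N-fold Kronecker product W(e), indexed by Fin N → ZMod d. -/
def weylN (d N : ℕ) (e : (Fin N → ZMod d) × (Fin N → ZMod d)) :
    Matrix (Fin N → ZMod d) (Fin N → ZMod d) ℂ :=
  Matrix.of fun j j' => ∏ n, weyl d (e.1 n) (e.2 n) (j n) (j' n)

/-- Symplectic product ⟨e,f⟩ = Σₙ (lₙ mₙ − kₙ nₙ). -/
def symp (d N : ℕ) (e f : (Fin N → ZMod d) × (Fin N → ZMod d)) : ZMod d :=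
  ∑ n, (e.2 n * f.1 n - e.1 n * f.2 n)

/-- `U` is an encoding for the error elements `g j` with unimodular scalars `μ j`, with
columns indexed by pairs `(x,k)` via the fixed bijection `ι`: each column
`u_{x,k} = U · e_{ι(x,k)}` is an eigenvector of `W(g j)` with eigenvalue `μ j · ω^{x j}`. -/
def IsEncoding (d N p : ℕ) [NeZero d]
    (g : Fin p → (Fin N → ZMod d) × (Fin N → ZMod d)) (μ : Fin p → ℂ)
    (ι : ((Fin p → ZMod d) × (Fin (N - p) → ZMod d)) ≃ (Fin N → ZMod d))
    (U : Matrix (Fin N → ZMod d) (Fin N → ZMod d) ℂ) : Prop :=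
  ∀ (j : Fin p) (x : Fin p → ZMod d) (k : Fin (N - p) → ZMod d),
    (weylN d N (g j)).mulVec (fun r => U r (ι (x, k))) =
      (μ j * omga d ^ (x j).val) • (fun r => U r (ι (x, k)))

lemma omga_pow_self (d : ℕ) [NeZero d] : omga d ^ d = 1 := by
  rw [omga, ← Complex.exp_nat_mul, mul_div_cancel₀ _ (Nat.cast_ne_zero.mpr (NeZero.ne d)),
    Complex.exp_two_pi_mul_I]

lemma omga_pow_val_add (d : ℕ) [NeZero d] (a b : ZMod d) :
    omga d ^ (a + b).val = omga d ^ a.val * omga d ^ b.val := by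
  rw [ZMod.val_add, ← pow_add, ← Nat.mod_add_div (a.val + b.val) d, pow_add, pow_mul,
    omga_pow_self, one_pow, mul_one, Nat.mod_add_div]

def omgaChar (d : ℕ) [NeZero d] : AddChar (ZMod d) ℂ where
  toFun a := omga d ^ a.val
  map_zero_eq_one' := by simp
  map_add_eq_mul' := omga_pow_val_add d

@[simp] lemma omgaChar_apply (d : ℕ) [NeZero d] (a : ZMod d) : omgaChar d a = omga d ^ a.val :=
  rfl

lemma AddChar.map_sum_eq_prod {A M ι : Type*} [AddCommMonoid A] [CommMonoid M]
    (ψ : AddChar A M) (s : Finset ι) (a : ι → A) : ψ (∑ i ∈ s, a i) = ∏ i ∈ s, ψ (a i) := by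
  classical
  induction s using Finset.induction_on with
  | empty => simp
  | insert i s hi ih => rw [Finset.sum_insert hi, Finset.prod_insert hi, map_add_eq_mul, ih]

lemma star_omgaChar (d : ℕ) [NeZero d] (a : ZMod d) : star (omgaChar d a) = omgaChar d (-a) :=
  (AddChar.map_neg_eq_conj _ a).symm

lemma of_prod_mul_of_prod {ι R : Type*} [Fintype ι] [DecidableEq ι] [CommSemiring R]
    {m : ι → Type*} [∀ i, Fintype (m i)] (A B : ∀ i, Matrix (m i) (m i) R) :
    (of fun (j j' : ∀ i, m i) => ∏ i, A i (j i) (j' i)) *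
        (of fun (j j' : ∀ i, m i) => ∏ i, B i (j i) (j' i)) =
      of fun j j' => ∏ i, (A i * B i) (j i) (j' i) := by
  ext j j'
  simp only [mul_apply, of_apply, ← Finset.prod_mul_distrib, Fintype.prod_sum]

lemma weyl_mul_weyl (d : ℕ) [NeZero d] (k l m n : ZMod d) :
    weyl d k l * weyl d m n = omgaChar d (l * m) • weyl d (k + m) (l + n) := by
  ext j j'
  rw [mul_apply, Finset.sum_eq_single (j + l) (fun b _ hb => by simp [weyl, hb]) (by simp)]
  simp only [weyl, of_apply, Matrix.smul_apply, smul_eq_mul, if_pos, ← add_assoc]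
  split_ifs
  · rw [omgaChar_apply, ← omga_pow_val_add, ← omga_pow_val_add]
    ring_nf
  · simp

lemma weylN_mul_weylN (d N : ℕ) [NeZero d] (e f : (Fin N → ZMod d) × (Fin N → ZMod d)) :
    weylN d N e * weylN d N f = omgaChar d (∑ n, e.2 n * f.1 n) • weylN d N (e + f) := by
  rw [weylN, weylN, of_prod_mul_of_prod]
  ext j j'
  simp only [weyl_mul_weyl, weylN, of_apply, Matrix.smul_apply, smul_eq_mul,
    Finset.prod_mul_distrib, AddChar.map_sum_eq_prod, Prod.fst_add, Prod.snd_add, Pi.add_apply]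

lemma weylN_add (d N : ℕ) [NeZero d] (e f : (Fin N → ZMod d) × (Fin N → ZMod d)) :
    weylN d N (e + f) = omgaChar d (-∑ n, e.2 n * f.1 n) • (weylN d N e * weylN d N f) := by
  rw [weylN_mul_weylN, smul_smul, ← AddChar.map_add_eq_mul, neg_add_cancel,
    AddChar.map_zero_eq_one, one_smul]

lemma weyl_neg (d : ℕ) [NeZero d] (k l : ZMod d) :
    weyl d (-k) (-l) = omgaChar d (-(l * k)) • (weyl d k l)ᴴ := by
  ext j j'
  simp only [weyl, of_apply, Matrix.smul_apply, conjTranspose_apply, smul_eq_mul]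
  by_cases h : j = j' + l
  · rw [if_pos (by rw [h]; ring), if_pos h, ← omgaChar_apply, ← omgaChar_apply,
      star_omgaChar, ← AddChar.map_add_eq_mul, h]
    ring_nf
  · rw [if_neg (by rintro rfl; exact h (by ring)), if_neg h, star_zero, mul_zero]

lemma weylN_neg (d N : ℕ) [NeZero d] (e : (Fin N → ZMod d) × (Fin N → ZMod d)) :
    weylN d N (-e) = omgaChar d (-∑ n, e.2 n * e.1 n) • (weylN d N e)ᴴ := by
  ext j j'
  simp only [weylN, of_apply, Matrix.smul_apply, conjTranspose_apply, smul_eq_mul,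
    Prod.fst_neg, Prod.snd_neg, Pi.neg_apply, weyl_neg, star_prod, Finset.prod_mul_distrib,
    ← Finset.sum_neg_distrib, AddChar.map_sum_eq_prod]

lemma conjTranspose_mul_mul_mul_of_mem_unitaryGroup {n R : Type*} [Fintype n] [DecidableEq n]
    [CommRing R] [StarRing R] {U : Matrix n n R} (hU : U ∈ unitaryGroup n R)
    (A B : Matrix n n R) : Uᴴ * (A * B) * U = (Uᴴ * A * U) * (Uᴴ * B * U) := by
  have hUU : U * Uᴴ = 1 := mem_unitaryGroup_iff.mp hU
  simp only [Matrix.mul_assoc]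
  rw [← Matrix.mul_assoc U, hUU, Matrix.one_mul]

section BlockShift

variable {α κ n R : Type*} [DecidableEq α]

def IsBlockShift [Add α] (ι : α × κ ≃ n) (s : α) (T : α → Matrix κ κ R) [Zero R]
    (A : Matrix n n R) : Prop :=
  ∀ x x' k k', A (ι (x', k')) (ι (x, k)) = if x' = x + s then T (x + s) k' k else 0

variable {ι : α × κ ≃ n}

lemma IsBlockShift.mul_apply [AddCommMonoid α] [Fintype α] [Fintype κ] [Fintype n]
    [NonUnitalNonAssocSemiring R] {A B : Matrix n n R} {s t : α} {S T : α → Matrix κ κ R}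
    (hA : IsBlockShift ι s S A) (hB : IsBlockShift ι t T B) (x x' : α) (k k' : κ) :
    (A * B) (ι (x', k')) (ι (x, k)) =
      if x' = x + s + t then (S (x + t + s) * T (x + t)) k' k else 0 := by
  rw [Matrix.mul_apply, ← ι.sum_comp, Fintype.sum_prod_type,
    Finset.sum_eq_single (x + t) (fun y _ hy => by simp [hB x, hy]) (by simp)]
  simp only [hA _, hB x, if_pos, ite_mul, zero_mul, add_right_comm x s t]
  split_ifs <;> simp [Matrix.mul_apply]

lemma IsBlockShift.conjTranspose_apply [AddCommGroup α] [AddMonoid R] [StarAddMonoid R]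
    {A : Matrix n n R} {s : α} {T : α → Matrix κ κ R} (hA : IsBlockShift ι s T A)
    (x x' : α) (k k' : κ) :
    Aᴴ (ι (x', k')) (ι (x, k)) = if x' = x - s then (T x)ᴴ k' k else 0 := by
  have hx : x = x' + s ↔ x' = x - s := by rw [eq_sub_iff_add_eq, eq_comm]
  rw [Matrix.conjTranspose_apply, hA]
  by_cases h : x' = x - s
  · rw [if_pos (hx.mpr h), if_pos h, ← hx.mpr h]
    rfl
  · rw [if_neg (mt hx.mp h), if_neg h, star_zero]

end BlockShift

theorem encoding_error_action_group_structure_general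
    (d N p : ℕ) [NeZero d]
    (ι : ((Fin p → ZMod d) × (Fin (N - p) → ZMod d)) ≃ (Fin N → ZMod d))
    (U : Matrix (Fin N → ZMod d) (Fin N → ZMod d) ℂ)
    (hU : U ∈ Matrix.unitaryGroup (Fin N → ZMod d) ℂ)
    (e f : (Fin N → ZMod d) × (Fin N → ZMod d))
    (se sf : Fin p → ZMod d)
    (Te Tf : (Fin p → ZMod d) →
      Matrix (Fin (N - p) → ZMod d) (Fin (N - p) → ZMod d) ℂ)
    (hTe : ∀ (x x' : Fin p → ZMod d) (k k' : Fin (N - p) → ZMod d),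
      (Uᴴ * weylN d N e * U) (ι (x', k')) (ι (x, k)) =
        if x' = x + se then Te (x + se) k' k else 0)
    (hTf : ∀ (x x' : Fin p → ZMod d) (k k' : Fin (N - p) → ZMod d),
      (Uᴴ * weylN d N f * U) (ι (x', k')) (ι (x, k)) =
        if x' = x + sf then Tf (x + sf) k' k else 0) :
    (∃ c : ℂ, ‖c‖ = 1 ∧
      ∀ (x x' : Fin p → ZMod d) (k k' : Fin (N - p) → ZMod d),
        (Uᴴ * weylN d N (e + f) * U) (ι (x', k')) (ι (x, k)) =
          if x' = x + se + sf
          then c * (Te (x + sf + se) * Tf (x + sf)) k' k else 0) ∧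
    (∃ c' : ℂ, ‖c'‖ = 1 ∧
      ∀ (x x' : Fin p → ZMod d) (k k' : Fin (N - p) → ZMod d),
        (Uᴴ * weylN d N (-e) * U) (ι (x', k')) (ι (x, k)) =
          if x' = x - se then c' * (Te x)ᴴ k' k else 0) := by
  refine ⟨⟨omgaChar d (-∑ n, e.2 n * f.1 n), AddChar.norm_apply _ _, fun x x' k k' => ?_⟩,
    ⟨omgaChar d (-∑ n, e.2 n * e.1 n), AddChar.norm_apply _ _, fun x x' k k' => ?_⟩⟩
  · rw [weylN_add, Matrix.mul_smul, Matrix.smul_mul, Matrix.smul_apply, smul_eq_mul,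
      conjTranspose_mul_mul_mul_of_mem_unitaryGroup hU, IsBlockShift.mul_apply hTe hTf,
      mul_ite, mul_zero]
  · have hconj : Uᴴ * (weylN d N e)ᴴ * U = (Uᴴ * weylN d N e * U)ᴴ := by
      simp only [conjTranspose_mul, conjTranspose_conjTranspose, Matrix.mul_assoc]
    rw [weylN_neg, Matrix.mul_smul, Matrix.smul_mul, Matrix.smul_apply, smul_eq_mul, hconj,
      IsBlockShift.conjTranspose_apply hTe, mul_ite, mul_zero]

/-- group structure of error actions: if (T^e_x) and (T^f_x) realize the block
decompositions of U† W(e) U and U† W(f) U, then up to unimodular phases, U† W(e+f) U is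
block-realized by x ↦ T^e_{x+s_f+s_e} · T^f_{x+s_f} and U† W(−e) U by x ↦ (T^e_x)†. -/
theorem encoding_error_action_group_structure
    (d N p : ℕ) [NeZero d] (hd : d.Prime) (hN : 1 ≤ N) (hp : p ≤ N)
    (g : Fin p → (Fin N → ZMod d) × (Fin N → ZMod d))
    (μ : Fin p → ℂ) (hμ : ∀ j, ‖μ j‖ = 1)
    (ι : ((Fin p → ZMod d) × (Fin (N - p) → ZMod d)) ≃ (Fin N → ZMod d))
    (U : Matrix (Fin N → ZMod d) (Fin N → ZMod d) ℂ)
    (hU : U ∈ Matrix.unitaryGroup (Fin N → ZMod d) ℂ)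
    (hEnc : IsEncoding d N p g μ ι U)
    (e f : (Fin N → ZMod d) × (Fin N → ZMod d))
    (se sf : Fin p → ZMod d)
    (hse : se = fun j => symp d N (g j) e)
    (hsf : sf = fun j => symp d N (g j) f)
    (Te Tf : (Fin p → ZMod d) →
      Matrix (Fin (N - p) → ZMod d) (Fin (N - p) → ZMod d) ℂ)
    (hTe : ∀ (x x' : Fin p → ZMod d) (k k' : Fin (N - p) → ZMod d),
      (Uᴴ * weylN d N e * U) (ι (x', k')) (ι (x, k)) =
        if x' = x + se then Te (x + se) k' k else 0)
    (hTf : ∀ (x x' : Fin p → ZMod d) (k k' : Fin (N - p) → ZMod d),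
      (Uᴴ * weylN d N f * U) (ι (x', k')) (ι (x, k)) =
        if x' = x + sf then Tf (x + sf) k' k else 0) :
    (∃ c : ℂ, ‖c‖ = 1 ∧
      ∀ (x x' : Fin p → ZMod d) (k k' : Fin (N - p) → ZMod d),
        (Uᴴ * weylN d N (e + f) * U) (ι (x', k')) (ι (x, k)) =
          if x' = x + se + sf
          then c * (Te (x + sf + se) * Tf (x + sf)) k' k else 0) ∧
    (∃ c' : ℂ, ‖c'‖ = 1 ∧
      ∀ (x x' : Fin p → ZMod d) (k k' : Fin (N - p) → ZMod d),
        (Uᴴ * weylN d N (-e) * U) (ι (x', k')) (ι (x, k)) =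
          if x' = x - se then c' * (Te x)ᴴ k' k else 0) :=
  encoding_error_action_group_structure_general d N p ι U hU e f se sf Te Tf hTe hTf

end
end

section
/- Let d be an odd prime and g = ((a₁,b₁),(a₂,b₂)) ∈ ((ZMod d)²)² with b₁ ≠ 0 and b₂ ≠ 0. For i = 1,2 let v^i_λ ∈ ℂ^{ZMod d} be the eigenvector basis of W_{a_i,b_i} given by (v^i_λ)_j := d^{−1/2} ω^{Γ^i_{λ,j}}, Γ^i_{λ,j} := j b_i^{−1} λ − 2^{−1} (j b_i^{−1})(j b_i^{−1} − 1) a_i b_i, and let U_c be the unitary d² × d² matrix (the canonic encoding) determined by U_c (e_λ ⊗ e_k) = v¹_k ⊗ v²_{λ−k} for all λ, k ∈ ZMod d. Then for every error element e = ((x₁,y₁),(x₂,y₂)) ∈ ((ZMod d)²)², setting s₁ := b₁x₁ − a₁y₁, s₂ := b₂x₂ − a₂y₂ and s := s₁ + s₂, there exist t, t' ∈ ZMod d and c ∈ ℂ with |c| = 1 such that U_c† (W_{x₁,y₁} ⊗ W_{x₂,y₂}) U_c = c · (W_{t',−s} ⊗ W_{t,−s₁}). -/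
open Matrix Complex

noncomputable section

/-- Γ_{λ,j} = j b⁻¹ λ − 2⁻¹ (j b⁻¹)(j b⁻¹ − 1) a b. -/
def gam (d : ℕ) (a b lam j : ZMod d) : ZMod d :=
  j * b⁻¹ * lam - 2⁻¹ * (j * b⁻¹) * (j * b⁻¹ - 1) * (a * b)

/-- The eigenvector v_λ of W_{a,b}: (v_λ)_j = d^{−1/2} ω^{Γ_{λ,j}}. -/
def vlam (d : ℕ) (a b lam : ZMod d) : ZMod d → ℂ :=
  fun j => (((Real.sqrt d)⁻¹ : ℝ) : ℂ) * omga d ^ (gam d a b lam j).val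

open Kronecker

/-- The canonic encoding U_c for N = 2, determined by U_c(e_λ ⊗ e_k) = v¹_k ⊗ v²_{λ−k}. -/
def ucan (d : ℕ) (a₁ b₁ a₂ b₂ : ZMod d) : Matrix (ZMod d × ZMod d) (ZMod d × ZMod d) ℂ :=
  Matrix.of fun r c => vlam d a₁ b₁ c.2 r.1 * vlam d a₂ b₂ (c.1 - c.2) r.2

/-!
The vectors `v_λ` form an orthonormal basis, because `Γ_λ - Γ_μ` is linear in `j` with slope
`b⁻¹ (λ - μ)`, so orthogonality of characters applies. Since `Γ_λ` is quadratic in `j`, the Weyl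
operator `W_{x,y}` permutes this basis up to phases: `W_{x,y} v_k = ω^{Γ_k(y)} v_{k+s}` with
`s = b x - a y`. The columns of `U_c` are product vectors `v¹_k ⊗ v²_{λ-k}`, so every entry of
`U_c† (W ⊗ W) U_c` factors into two such matrix elements; it is nonzero exactly when
`k ↦ k + s₁` and `λ ↦ λ + s₁ + s₂`, and its phase is affine in `(λ, k)`, which is the Weyl form.
-/

open ZMod

lemma conjTranspose_mul_kronecker_mul_apply {ι m n R : Type*} [Fintype m] [Fintype n]
    [CommSemiring R] [StarRing R] (F : ι → m → R) (G : ι → n → R)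
    (U : Matrix (m × n) ι R) (hU : ∀ r c, U r c = F c r.1 * G c r.2)
    (A : Matrix m m R) (B : Matrix n n R) (c c' : ι) :
    (Uᴴ * (A ⊗ₖ B) * U) c' c =
      (star (F c') ⬝ᵥ A *ᵥ F c) * (star (G c') ⬝ᵥ B *ᵥ G c) := by
  rw [dotProduct_mulVec, dotProduct_mulVec, dotProduct, dotProduct, Finset.sum_mul_sum]
  simp only [mul_apply, Fintype.sum_prod_type, conjTranspose_apply, hU, kroneckerMap_apply,
    vecMul, dotProduct, Finset.sum_mul, Finset.mul_sum, Pi.star_apply, star_mul']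
  refine Finset.sum_congr rfl fun _ _ => Finset.sum_congr rfl fun _ _ => ?_
  rw [Finset.sum_comm]
  exact Finset.sum_congr rfl fun _ _ => Finset.sum_congr rfl fun _ _ => by ring

section Character

variable {d : ℕ} [NeZero d]

lemma omga_pow_val (m : ZMod d) : omga d ^ m.val = stdAddChar m := by
  rw [stdAddChar_apply, toCircle_apply, omga, ← Complex.exp_nat_mul]
  ring_nf

lemma star_stdAddChar (m : ZMod d) : star (stdAddChar m) = stdAddChar (-m) := by
  rw [stdAddChar_apply, stdAddChar_apply, AddChar.map_neg_eq_inv, Circle.coe_inv_eq_conj]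
  rfl

lemma norm_stdAddChar (m : ZMod d) : ‖stdAddChar m‖ = 1 := Circle.norm_coe _

lemma sum_stdAddChar_mul (c : ZMod d) :
    ∑ j : ZMod d, stdAddChar (j * c) = if c = 0 then (d : ℂ) else 0 := by
  rw [AddChar.sum_mulShift c (isPrimitive_stdAddChar d), ZMod.card]
  push_cast; rfl

end Character

section Weyl

variable {d : ℕ} [NeZero d]

lemma weyl_mulVec_apply (k l : ZMod d) (v : ZMod d → ℂ) (j : ZMod d) :
    (weyl d k l *ᵥ v) j = stdAddChar (j * k) * v (j + l) := by
  simp [weyl, mulVec, dotProduct, omga_pow_val]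

lemma weyl_kronecker_weyl_apply (k l k' l' i i' j j' : ZMod d) :
    (weyl d k l ⊗ₖ weyl d k' l') (i, i') (j, j') =
      if j = i + l ∧ j' = i' + l' then stdAddChar (i * k + i' * k') else 0 := by
  simp only [kroneckerMap_apply, weyl, of_apply, omga_pow_val, AddChar.map_add_eq_mul,
    ite_zero_mul_ite_zero]

end Weyl

section Eigenbasis

variable {d : ℕ}

lemma gam_sub_gam (a b k m q : ZMod d) : gam d a b k q - gam d a b m q = q * (b⁻¹ * (k - m)) := by
  unfold gam; ring

lemma mul_add_gam_add {a b : ZMod d} (hb : IsUnit b) (h2 : IsUnit (2 : ZMod d)) (x y k q : ZMod d) :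
    q * x + gam d a b k (q + y) = gam d a b (k + (b * x - a * y)) q + gam d a b k y := by
  have hb' := ZMod.inv_mul_of_unit b hb
  have h2' := ZMod.inv_mul_of_unit 2 h2
  unfold gam
  linear_combination (-(q * x) - a * q * y * b⁻¹) * hb' - a * q * y * b⁻¹ * b⁻¹ * b * h2'

variable [NeZero d]

lemma vlam_apply (a b k j : ZMod d) :
    vlam d a b k j = ((√d)⁻¹ : ℝ) * stdAddChar (gam d a b k j) := by
  rw [vlam, omga_pow_val]

lemma weyl_mulVec_vlam {a b : ZMod d} (hb : IsUnit b) (h2 : IsUnit (2 : ZMod d))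
    (x y k : ZMod d) :
    weyl d x y *ᵥ vlam d a b k = stdAddChar (gam d a b k y) • vlam d a b (k + (b * x - a * y)) := by
  ext q
  rw [weyl_mulVec_apply, Pi.smul_apply, vlam_apply, vlam_apply, smul_eq_mul, mul_left_comm,
    ← AddChar.map_add_eq_mul, mul_add_gam_add hb h2, AddChar.map_add_eq_mul]
  ring

lemma star_vlam_dotProduct_vlam {a b : ZMod d} (hb : IsUnit b) (m k : ZMod d) :
    star (vlam d a b m) ⬝ᵥ vlam d a b k = if m = k then 1 else 0 := by
  have hterm : ∀ q, star (vlam d a b m q) * vlam d a b k q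
      = ((√d)⁻¹ * (√d)⁻¹ : ℝ) * stdAddChar (q * (b⁻¹ * (k - m))) := by
    intro q
    rw [vlam_apply, vlam_apply, star_mul', star_stdAddChar, Complex.star_def, Complex.conj_ofReal,
      ← gam_sub_gam, sub_eq_neg_add, AddChar.map_add_eq_mul]
    push_cast; ring
  have hinv : b⁻¹ * (k - m) = 0 ↔ m = k := by
    rw [(IsUnit.of_mul_eq_one _ (ZMod.inv_mul_of_unit b hb)).mul_right_eq_zero, sub_eq_zero,
      eq_comm]
  simp only [dotProduct, Pi.star_apply, hterm, ← Finset.mul_sum, sum_stdAddChar_mul, hinv]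
  split_ifs
  · have hnorm : ((√d)⁻¹ * (√d)⁻¹ : ℝ) * d = 1 := by
      rw [← mul_inv, Real.mul_self_sqrt d.cast_nonneg, inv_mul_cancel₀ (NeZero.ne _)]
    exact_mod_cast hnorm
  · simp

lemma star_vlam_dotProduct_weyl_mulVec_vlam {a b : ZMod d} (hb : IsUnit b)
    (h2 : IsUnit (2 : ZMod d)) (x y m k : ZMod d) :
    star (vlam d a b m) ⬝ᵥ (weyl d x y *ᵥ vlam d a b k) =
      if m = k + (b * x - a * y) then stdAddChar (gam d a b k y) else 0 := by
  rw [weyl_mulVec_vlam hb h2, dotProduct_smul, star_vlam_dotProduct_vlam hb, smul_eq_mul,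
    mul_ite, mul_one, mul_zero]

end Eigenbasis

section CanonicEncoding

variable {d : ℕ} [NeZero d] {a₁ b₁ a₂ b₂ : ZMod d}

lemma conjTranspose_ucan_mul_weyl_kronecker_mul_ucan_apply (hb₁ : IsUnit b₁) (hb₂ : IsUnit b₂)
    (h2 : IsUnit (2 : ZMod d)) (x₁ y₁ x₂ y₂ μ m l k : ZMod d) :
    ((ucan d a₁ b₁ a₂ b₂)ᴴ * (weyl d x₁ y₁ ⊗ₖ weyl d x₂ y₂) * ucan d a₁ b₁ a₂ b₂) (μ, m) (l, k) =
      if l = μ - ((b₁ * x₁ - a₁ * y₁) + (b₂ * x₂ - a₂ * y₂)) ∧ k = m - (b₁ * x₁ - a₁ * y₁) then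
        stdAddChar (gam d a₁ b₁ k y₁ + gam d a₂ b₂ (l - k) y₂)
      else 0 := by
  have hU : ∀ r c, ucan d a₁ b₁ a₂ b₂ r c = vlam d a₁ b₁ c.2 r.1 * vlam d a₂ b₂ (c.1 - c.2) r.2 :=
    fun _ _ => rfl
  rw [conjTranspose_mul_kronecker_mul_apply _ _ _ hU,
    star_vlam_dotProduct_weyl_mulVec_vlam hb₁ h2, star_vlam_dotProduct_weyl_mulVec_vlam hb₂ h2,
    ite_zero_mul_ite_zero, AddChar.map_add_eq_mul]
  refine if_congr ⟨fun ⟨h₁, h₂⟩ => ⟨?_, ?_⟩, fun ⟨h₁, h₂⟩ => ⟨?_, ?_⟩⟩ rfl rfl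
  · linear_combination -h₂ - h₁
  · linear_combination -h₁
  · linear_combination -h₂
  · linear_combination h₂ - h₁

end CanonicEncoding

/-- in the canonic encoding, the action of any two-copy Weyl error is again of
Weyl form: U_c† (W_{x₁,y₁} ⊗ W_{x₂,y₂}) U_c = c · (W_{t',−s} ⊗ W_{t,−s₁}) for some t, t' and
a unimodular phase c, where s₁ = b₁x₁ − a₁y₁, s₂ = b₂x₂ − a₂y₂, s = s₁ + s₂. -/
theorem canonic_encoding_error_action
    (d : ℕ) [NeZero d] (hd : d.Prime) (hodd : Odd d)
    (a₁ b₁ a₂ b₂ : ZMod d) (hb₁ : b₁ ≠ 0) (hb₂ : b₂ ≠ 0)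
    (x₁ y₁ x₂ y₂ : ZMod d) :
    ∃ (t t' : ZMod d) (c : ℂ), ‖c‖ = 1 ∧
      (ucan d a₁ b₁ a₂ b₂)ᴴ * (weyl d x₁ y₁ ⊗ₖ weyl d x₂ y₂) * ucan d a₁ b₁ a₂ b₂ =
        c • (weyl d t' (-((b₁ * x₁ - a₁ * y₁) + (b₂ * x₂ - a₂ * y₂))) ⊗ₖ
              weyl d t (-(b₁ * x₁ - a₁ * y₁))) := by
  have := Fact.mk hd
  have h2 : IsUnit (2 : ZMod d) := by
    simpa using (ZMod.isUnit_iff_coprime 2 d).mpr (Nat.coprime_two_left.mpr hodd)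
  -- `Γ_k(y)` is affine in `k` with slope `y b⁻¹`, which gives `t` and `t'`; `c` is the phase of
  -- the entry in row `(0, 0)`.
  refine ⟨y₁ * b₁⁻¹ - y₂ * b₂⁻¹, y₂ * b₂⁻¹,
    stdAddChar (gam d a₁ b₁ (-(b₁ * x₁ - a₁ * y₁)) y₁ + gam d a₂ b₂ (-(b₂ * x₂ - a₂ * y₂)) y₂),
    norm_stdAddChar _, ?_⟩
  ext ⟨μ, m⟩ ⟨l, k⟩
  rw [conjTranspose_ucan_mul_weyl_kronecker_mul_ucan_apply hb₁.isUnit hb₂.isUnit h2, Matrix.smul_apply,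
    weyl_kronecker_weyl_apply, ← sub_eq_add_neg, ← sub_eq_add_neg]
  split_ifs with h
  · obtain ⟨rfl, rfl⟩ := h
    rw [smul_eq_mul, ← AddChar.map_add_eq_mul]
    congr 1
    unfold gam
    ring
  · rw [smul_zero]
end
end
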